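/- arXiv:2412.08166 — 13 statements merged into one kernel-verified Lean document; each statement's English description precedes it below -/
import Mathlib

section
/- For all n ≥ 0, P_{N+n}(x) = P_N(x)·P_n(x) − P_{N-1}(x)·P_n*(x)/2. -/
theorem shift_by_N (a : ℝ) (N : ℕ) (hN : 0 < N)
    (P Pstar : ℕ → ℝ → ℝ)
    (hP0 : ∀ x, P 0 x = 1) (hP1 : ∀ x, P 1 x = 2*x - 2*a)
    (hP : ∀ n : ℕ, 1 ≤ n → ∀ x,
      2*x*P n x = P (n+1) x + 2*a*Real.cos (2*Real.pi*n/N) * P n x + P (n-1) x)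
    (hQ0 : ∀ x, Pstar 0 x = 0) (hQ1 : ∀ x, Pstar 1 x = 2)
    (hQ : ∀ n : ℕ, 1 ≤ n → ∀ x,
      2*x*Pstar n x = Pstar (n+1) x + 2*a*Real.cos (2*Real.pi*n/N) * Pstar n x + Pstar (n-1) x) :
    ∀ n : ℕ, ∀ x, P (N + n) x = P N x * P n x - P (N-1) x * Pstar n x / 2 := by
  have hNne : (N:ℝ) ≠ 0 := Nat.cast_ne_zero.mpr hN.ne'
  have hcos : ∀ n : ℕ, Real.cos (2*Real.pi*((N+n : ℕ) : ℝ)/N) = Real.cos (2*Real.pi*n/N) := by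
    intro n
    have h : (2*Real.pi*((N+n : ℕ) : ℝ)/N) = 2*Real.pi*n/N + 2*Real.pi := by
      push_cast; field_simp; ring
    rw [h, Real.cos_add_two_pi]
  have key : ∀ n : ℕ, ∀ x,
      P (N + n) x = P N x * P n x - P (N-1) x * Pstar n x / 2 ∧
      P (N + n + 1) x = P N x * P (n+1) x - P (N-1) x * Pstar (n+1) x / 2 := by
    intro n
    induction n with
    | zero =>
      intro x
      constructor
      · simp [hP0, hQ0]
      · have e1 := hP N hN x
        have hc : Real.cos (2*Real.pi*(N:ℝ)/N) = 1 := by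
          have h : (2*Real.pi*(N:ℝ)/N) = 2*Real.pi := by field_simp
          rw [h, Real.cos_two_pi]
        rw [hc] at e1
        simp only [Nat.add_zero, hP1, hQ1]
        have hNsub : P (N-1+1) x = P N x := by
          congr 1; omega
        nlinarith [e1, hNsub]
      -- note: P (N-1) appears in e1 as P (N-1)
    | succ n ih =>
      intro x
      obtain ⟨h0, h1⟩ := ih x
      refine ⟨h1, ?_⟩
      show P (N + n + 1 + 1) x = P N x * P (n + 1 + 1) x - P (N-1) x * Pstar (n + 1 + 1) x / 2
      have e1 := hP (N + n + 1) (by omega) x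
      have e2 := hP (n+1) (by omega) x
      have e3 := hQ (n+1) (by omega) x
      have hc := hcos (n+1)
      have hidx : (N + (n+1) : ℕ) = N + n + 1 := by omega
      rw [hidx] at hc
      rw [hc] at e1
      have hs1 : N + n + 1 - 1 = N + n := by omega
      rw [hs1] at e1
      have hs2 : n + 1 - 1 = n := rfl
      rw [hs2] at e2 e3
      linear_combination (-1)*e1 + (P N x)*e2 - (P (N-1) x)/2*e3
        + (2*x - 2*a*Real.cos (2*Real.pi*(((n+1:ℕ)):ℝ)/N))*h1 - h0
  intro n x
  exact (key n x).1
end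

section
/- P_{2N-1}(x) = P_{N-1}(x)·(P_N(x) − P_{N-1}*(x)/2), i.e., P_{N-1}(x) divides P_{2N-1}(x). -/
theorem P_two_N_minus_one_factorization (a : ℝ) (N : ℕ) (hN : 0 < N)
    (P Pstar : ℕ → ℝ → ℝ)
    (hP0 : ∀ x, P 0 x = 1) (hP1 : ∀ x, P 1 x = 2*x - 2*a)
    (hP : ∀ n : ℕ, 1 ≤ n → ∀ x,
      2*x*P n x = P (n+1) x + 2*a*Real.cos (2*Real.pi*n/N) * P n x + P (n-1) x)
    (hQ0 : ∀ x, Pstar 0 x = 0) (hQ1 : ∀ x, Pstar 1 x = 2)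
    (hQ : ∀ n : ℕ, 1 ≤ n → ∀ x,
      2*x*Pstar n x = Pstar (n+1) x + 2*a*Real.cos (2*Real.pi*n/N) * Pstar n x + Pstar (n-1) x) :
    ∀ x, P (2*N - 1) x = P (N-1) x * (P N x - Pstar (N-1) x / 2) := by
  intro x
  have hNr : (N:ℝ) ≠ 0 := Nat.cast_ne_zero.mpr hN.ne'
  have key : ∀ k : ℕ, (P (N+k) x = P N x * P k x - P (N-1) x * Pstar k x / 2) ∧
      (P (N+(k+1)) x = P N x * P (k+1) x - P (N-1) x * Pstar (k+1) x / 2) := by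
    intro k
    induction k with
    | zero =>
      constructor
      · simp [hP0, hQ0]
      · have h1 := hP N hN x
        have hc : Real.cos (2*Real.pi*(N:ℝ)/N) = 1 := by
          have harg : 2*Real.pi*(N:ℝ)/N = 2*Real.pi := by field_simp
          rw [harg, Real.cos_two_pi]
        rw [hc] at h1
        rw [hP1, hQ1]
        linear_combination -h1
    | succ k ih =>
      refine ⟨ih.2, ?_⟩
      have hPk := hP (k+1) (by omega) x
      have hQk := hQ (k+1) (by omega) x
      have hPNk := hP (N+(k+1)) (by omega) x
      have hcc : Real.cos (2*Real.pi*((N+(k+1):ℕ):ℝ)/N)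
          = Real.cos (2*Real.pi*((k+1:ℕ):ℝ)/N) := by
        have harg : (2*Real.pi*((N+(k+1):ℕ):ℝ)/N) = 2*Real.pi*((k+1:ℕ):ℝ)/N + 2*Real.pi := by
          push_cast
          field_simp
          ring
        rw [harg, Real.cos_add_two_pi]
      rw [hcc] at hPNk
      have e1 : N+(k+1)+1 = N+(k+1+1) := by omega
      have e2 : N+(k+1)-1 = N+k := by omega
      have e3 : k+1-1 = k := by omega
      rw [e1, e2] at hPNk
      rw [e3] at hPk hQk
      linear_combination (-1)*hPNk + (P N x)*hPk - (P (N-1) x/2)*hQk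
        + (2*x - 2*a*Real.cos (2*Real.pi*((k+1:ℕ):ℝ)/N))*ih.2 - ih.1
  have hfin := (key (N-1)).1
  have e : N+(N-1) = 2*N-1 := by omega
  rw [e] at hfin
  linear_combination hfin
end

section
/- For every k ≥ 2N − 1, the polynomials satisfy P_k(x) − 2 g_N(x) P_{k−N}(x) + P_{k−2N}(x) = 0, where g_N(x) = (P_N(x) − P_{N-1}*(x)/2)/2. -/
lemma seq_ext_aux (c : ℤ → ℝ) (u v : ℤ → ℝ)
    (hu : ∀ n : ℤ, 1 ≤ n → u (n + 1) = c n * u n - u (n - 1))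
    (hv : ∀ n : ℤ, 1 ≤ n → v (n + 1) = c n * v n - v (n - 1))
    (h0 : u 0 = v 0) (h1 : u 1 = v 1) :
    ∀ n : ℤ, 0 ≤ n → u n = v n := by
  have key : ∀ m : ℕ, u m = v m ∧ u ((m : ℤ) + 1) = v ((m : ℤ) + 1) := by
    intro m
    induction m with
    | zero => exact ⟨by simpa using h0, by simpa using h1⟩
    | succ k ih =>
      have hk1 : (1 : ℤ) ≤ (k : ℤ) + 1 := by omega
      have hu' := hu ((k : ℤ) + 1) hk1
      have hv' := hv ((k : ℤ) + 1) hk1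
      have e : ((k : ℤ) + 1 - 1) = (k : ℤ) := by ring
      rw [e] at hu' hv'
      constructor
      · push_cast
        exact ih.2
      · push_cast
        rw [hu', hv', ih.1, ih.2]
  intro n hn
  lift n to ℕ using hn
  exact (key n).1

theorem linear_recurrence_with_gN (a : ℝ) (N : ℕ) (hN : 0 < N)
    (P Pstar : ℤ → ℝ → ℝ)
    (hPm1 : ∀ x, P (-1) x = 0)
    (hP0 : ∀ x, P 0 x = 1) (hP1 : ∀ x, P 1 x = 2*x - 2*a)
    (hP : ∀ n : ℤ, 1 ≤ n → ∀ x,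
      2*x*P n x = P (n+1) x + 2*a*Real.cos (2*Real.pi*n/N) * P n x + P (n-1) x)
    (hQ0 : ∀ x, Pstar 0 x = 0) (hQ1 : ∀ x, Pstar 1 x = 2)
    (hQ : ∀ n : ℤ, 1 ≤ n → ∀ x,
      2*x*Pstar n x = Pstar (n+1) x + 2*a*Real.cos (2*Real.pi*n/N) * Pstar n x + Pstar (n-1) x)
    (g : ℝ → ℝ) (hg : ∀ x, g x = (P N x - Pstar (N-1) x / 2) / 2) :
    ∀ k : ℤ, 2*(N:ℤ) - 1 ≤ k → ∀ x,
      P k x - 2 * g x * P (k - N) x + P (k - 2*N) x = 0 := by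
  intro k hk x
  have hNR : ((N : ℝ)) ≠ 0 := Nat.cast_ne_zero.mpr hN.ne'
  have hNge1 : (1 : ℤ) ≤ (N : ℤ) := by exact_mod_cast hN
  set c : ℤ → ℝ := fun n => 2*x - 2*a*Real.cos (2*Real.pi*n/N) with hc
  have hu : ∀ n : ℤ, 1 ≤ n → P (n+1) x = c n * P n x - P (n-1) x := by
    intro n hn
    simp only [hc]
    linear_combination -hP n hn x
  have hq : ∀ n : ℤ, 1 ≤ n → Pstar (n+1) x = c n * Pstar n x - Pstar (n-1) x := by
    intro n hn
    simp only [hc]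
    linear_combination -hQ n hn x
  have hcper : ∀ n : ℤ, c (n + (N:ℤ)) = c n := by
    intro n
    simp only [hc]
    have harg : (2*Real.pi*((n:ℝ)+(N:ℝ))/(N:ℝ)) = 2*Real.pi*(n:ℝ)/(N:ℝ) + 2*Real.pi := by
      field_simp
    push_cast
    rw [harg, Real.cos_add_two_pi]
  have hcNval : c ((N:ℤ)) = 2*x - 2*a := by
    simp only [hc]
    have harg : (2*Real.pi*(((N:ℤ)):ℝ)/(N:ℝ)) = ((1:ℤ):ℝ)*(2*Real.pi) := by
      push_cast
      field_simp
    rw [harg, Real.cos_int_mul_two_pi]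
    ring
  have hc2Nval : c (2*(N:ℤ)) = 2*x - 2*a := by
    simp only [hc]
    push_cast
    rw [show 2*Real.pi*(2*(N:ℝ))/(N:ℝ) = ((2:ℤ):ℝ)*(2*Real.pi) from by push_cast; field_simp,
      Real.cos_int_mul_two_pi]
    ring
  have hQN : Pstar ((N:ℤ)+1) x = (2*x-2*a) * Pstar (N:ℤ) x - Pstar ((N:ℤ)-1) x := by
    have h := hq (N:ℤ) hNge1
    rwa [hcNval] at h
  -- Wronskian
  have hW : ∀ m : ℕ, P ((m:ℤ)+1) x * Pstar (m:ℤ) x - P (m:ℤ) x * Pstar ((m:ℤ)+1) x = -2 := by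
    intro m
    induction m with
    | zero => simp [hP0, hQ0, hQ1]
    | succ k ih =>
      have hk1 : (1:ℤ) ≤ (k:ℤ)+1 := by omega
      have hu' := hu ((k:ℤ)+1) hk1
      have hq' := hq ((k:ℤ)+1) hk1
      have e : ((k:ℤ)+1-1) = (k:ℤ) := by ring
      rw [e] at hu' hq'
      push_cast
      linear_combination Pstar ((k:ℤ)+1) x * hu' - P ((k:ℤ)+1) x * hq' + ih
  have hWN := hW N
  -- the recurrence for n ↦ P (n + N)
  have hPNrec : ∀ n : ℤ, 1 ≤ n → P (n+1+(N:ℤ)) x = c n * P (n+(N:ℤ)) x - P (n-1+(N:ℤ)) x := by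
    intro n hn
    have h := hu (n+(N:ℤ)) (by omega)
    rw [hcper] at h
    rw [show n+1+(N:ℤ) = n+(N:ℤ)+1 from by ring, show n-1+(N:ℤ) = n+(N:ℤ)-1 from by ring]
    exact h
  -- shift representation
  have hshiftP : ∀ n : ℤ, 0 ≤ n →
      P (n+(N:ℤ)) x = P (N:ℤ) x * P n x
        + ((P ((N:ℤ)+1) x - (2*x-2*a)*P (N:ℤ) x)/2) * Pstar n x := by
    refine seq_ext_aux c (fun n => P (n+(N:ℤ)) x)
      (fun n => P (N:ℤ) x * P n x
        + ((P ((N:ℤ)+1) x - (2*x-2*a)*P (N:ℤ) x)/2) * Pstar n x) ?_ ?_ ?_ ?_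
    · intro n hn
      exact hPNrec n hn
    · intro n hn
      have h1 := hu n hn
      have h2 := hq n hn
      show P (N:ℤ) x * P (n+1) x + ((P ((N:ℤ)+1) x - (2*x-2*a)*P (N:ℤ) x)/2) * Pstar (n+1) x
        = c n * (P (N:ℤ) x * P n x + ((P ((N:ℤ)+1) x - (2*x-2*a)*P (N:ℤ) x)/2) * Pstar n x)
          - (P (N:ℤ) x * P (n-1) x
            + ((P ((N:ℤ)+1) x - (2*x-2*a)*P (N:ℤ) x)/2) * Pstar (n-1) x)
      linear_combination (P (N:ℤ) x) * h1 + ((P ((N:ℤ)+1) x - (2*x-2*a)*P (N:ℤ) x)/2) * h2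
    · show P (0+(N:ℤ)) x = P (N:ℤ) x * P 0 x
        + ((P ((N:ℤ)+1) x - (2*x-2*a)*P (N:ℤ) x)/2) * Pstar 0 x
      rw [zero_add, hP0, hQ0]
      ring
    · show P (1+(N:ℤ)) x = P (N:ℤ) x * P 1 x
        + ((P ((N:ℤ)+1) x - (2*x-2*a)*P (N:ℤ) x)/2) * Pstar 1 x
      rw [show (1:ℤ)+(N:ℤ) = (N:ℤ)+1 from add_comm _ _, hP1, hQ1]
      ring
  have hsPN : P ((N:ℤ)+(N:ℤ)) x = P (N:ℤ) x * P (N:ℤ) x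
      + ((P ((N:ℤ)+1) x - (2*x-2*a)*P (N:ℤ) x)/2) * Pstar (N:ℤ) x :=
    hshiftP (N:ℤ) (by omega)
  have hsPN1 : P ((N:ℤ)+1+(N:ℤ)) x = P (N:ℤ) x * P ((N:ℤ)+1) x
      + ((P ((N:ℤ)+1) x - (2*x-2*a)*P (N:ℤ) x)/2) * Pstar ((N:ℤ)+1) x :=
    hshiftP ((N:ℤ)+1) (by omega)
  -- main identity for n ≥ 0
  have hmain : ∀ n : ℤ, 0 ≤ n → P (n+2*(N:ℤ)) x = 2*g x*P (n+(N:ℤ)) x - P n x := by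
    refine seq_ext_aux c (fun n => P (n+2*(N:ℤ)) x)
      (fun n => 2*g x*P (n+(N:ℤ)) x - P n x) ?_ ?_ ?_ ?_
    · intro n hn
      have hcc : c (n+2*(N:ℤ)) = c n := by
        rw [show n+2*(N:ℤ) = (n+(N:ℤ))+(N:ℤ) from by ring, hcper, hcper]
      have h := hu (n+2*(N:ℤ)) (by omega)
      rw [hcc] at h
      show P (n+1+2*(N:ℤ)) x = c n * P (n+2*(N:ℤ)) x - P (n-1+2*(N:ℤ)) x
      rw [show n+1+2*(N:ℤ) = n+2*(N:ℤ)+1 from by ring,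
        show n-1+2*(N:ℤ) = n+2*(N:ℤ)-1 from by ring]
      exact h
    · intro n hn
      have h1 := hPNrec n hn
      have h2 := hu n hn
      show 2*g x*P (n+1+(N:ℤ)) x - P (n+1) x
        = c n * (2*g x*P (n+(N:ℤ)) x - P n x) - (2*g x*P (n-1+(N:ℤ)) x - P (n-1) x)
      linear_combination (2*g x) * h1 - h2
    · show P (0+2*(N:ℤ)) x = 2*g x*P (0+(N:ℤ)) x - P 0 x
      rw [zero_add, zero_add, hP0, show 2*(N:ℤ) = (N:ℤ)+(N:ℤ) from by ring]
      linear_combination hsPN + (-2*P (N:ℤ) x)*(hg x) + (P (N:ℤ) x/2)*hQN + (1/2)*hWN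
    · show P (1+2*(N:ℤ)) x = 2*g x*P (1+(N:ℤ)) x - P 1 x
      rw [hP1, show (1:ℤ)+2*(N:ℤ) = (N:ℤ)+1+(N:ℤ) from by ring,
        show (1:ℤ)+(N:ℤ) = (N:ℤ)+1 from add_comm _ _]
      linear_combination hsPN1 + (-2*P ((N:ℤ)+1) x)*(hg x) + (P ((N:ℤ)+1) x/2)*hQN
        + ((2*x-2*a)/2)*hWN
  by_cases hk2 : 2*(N:ℤ) ≤ k
  · have h := hmain (k - 2*(N:ℤ)) (by omega)
    rw [show k-2*(N:ℤ)+2*(N:ℤ) = k from by ring,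
      show k-2*(N:ℤ)+(N:ℤ) = k-(N:ℤ) from by ring] at h
    linear_combination h
  · have hkeq : k = 2*(N:ℤ) - 1 := by omega
    subst hkeq
    have h0' := hmain 0 le_rfl
    rw [zero_add, zero_add, hP0] at h0'
    have h1' := hmain 1 (by norm_num)
    rw [hP1, show (1:ℤ)+2*(N:ℤ) = 2*(N:ℤ)+1 from by ring,
      show (1:ℤ)+(N:ℤ) = (N:ℤ)+1 from add_comm _ _] at h1'
    have hrec2N := hu (2*(N:ℤ)) (by omega)
    rw [hc2Nval] at hrec2N
    have hrecN := hu (N:ℤ) hNge1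
    rw [hcNval] at hrecN
    rw [show 2*(N:ℤ)-1-(N:ℤ) = (N:ℤ)-1 from by ring,
      show 2*(N:ℤ)-1-2*(N:ℤ) = -1 from by ring, hPm1]
    linear_combination hrec2N + (-(2*g x))*hrecN + (2*x-2*a)*h0' - h1'
end

section
/- For all k ≥ 0 and j ≥ 1, P_{k+jN}(x) = P_{k+N}(x)·U_{j−1}(g_N(x)) − P_k(x)·U_{j−2}(g_N(x)), where U_m denotes the Chebyshev polynomial of the second kind (with the convention U_{−1} = 0). -/
open Polynomial Polynomial.Chebyshev

private lemma seq_uniq (c : ℕ → ℝ) (x : ℝ) (S T : ℕ → ℝ)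
    (hS : ∀ n, 1 ≤ n → 2*x*S n = S (n+1) + c n * S n + S (n-1))
    (hT : ∀ n, 1 ≤ n → 2*x*T n = T (n+1) + c n * T n + T (n-1))
    (h0 : S 0 = T 0) (h1 : S 1 = T 1) : ∀ n, S n = T n := by
  have key : ∀ n, S n = T n ∧ S (n+1) = T (n+1) := by
    intro n
    induction n with
    | zero => exact ⟨h0, h1⟩
    | succ n ih =>
      refine ⟨ih.2, ?_⟩
      have hs := hS (n+1) (Nat.le_add_left 1 n)
      have ht := hT (n+1) (Nat.le_add_left 1 n)
      simp only [Nat.add_sub_cancel] at hs ht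
      rw [ih.1, ih.2] at hs
      linarith
  exact fun n => (key n).1

theorem P_shift_chebyshev (a : ℝ) (N : ℕ) (hN : 0 < N)
    (P Pstar : ℕ → ℝ → ℝ)
    (hP0 : ∀ x, P 0 x = 1) (hP1 : ∀ x, P 1 x = 2*x - 2*a)
    (hP : ∀ n : ℕ, 1 ≤ n → ∀ x,
      2*x*P n x = P (n+1) x + 2*a*Real.cos (2*Real.pi*n/N) * P n x + P (n-1) x)
    (hQ0 : ∀ x, Pstar 0 x = 0) (hQ1 : ∀ x, Pstar 1 x = 2)
    (hQ : ∀ n : ℕ, 1 ≤ n → ∀ x,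
      2*x*Pstar n x = Pstar (n+1) x + 2*a*Real.cos (2*Real.pi*n/N) * Pstar n x + Pstar (n-1) x)
    (g : ℝ → ℝ) (hg : ∀ x, g x = (P N x - Pstar (N-1) x / 2) / 2) :
    ∀ (k : ℕ) (j : ℕ), 1 ≤ j → ∀ x,
      P (k + j*N) x = P (k + N) x * (Chebyshev.U ℝ ((j:ℤ) - 1)).eval (g x)
        - P k x * (Chebyshev.U ℝ ((j:ℤ) - 2)).eval (g x) := by
  intro k j hj x
  have hNne : (N:ℝ) ≠ 0 := Nat.cast_ne_zero.mpr hN.ne'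
  -- periodicity of the cosine coefficient
  have hcos : ∀ n : ℕ, Real.cos (2*Real.pi*((n+N:ℕ):ℝ)/N) = Real.cos (2*Real.pi*n/N) := by
    intro n
    have h : (2*Real.pi*((n+N:ℕ):ℝ)/N) = 2*Real.pi*n/N + 2*Real.pi := by
      push_cast; field_simp
    rw [h, Real.cos_add_two_pi]
  have hcN : Real.cos (2*Real.pi*(N:ℝ)/N) = 1 := by
    rw [show 2*Real.pi*(N:ℝ)/N = 2*Real.pi by field_simp, Real.cos_two_pi]
  set c : ℕ → ℝ := fun n => 2*a*Real.cos (2*Real.pi*n/N) with hcdef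
  -- expansion of shifted solutions in the basis (P, Pstar)
  have hexpP : ∀ n, P (n+N) x = P N x * P n x
      + ((P (N+1) x - P N x * (2*x-2*a))/2) * Pstar n x := by
    apply seq_uniq c x
    · intro n hn
      have h := hP (n+N) (by omega) x
      rw [show n+N+1 = n+1+N from by omega, show n+N-1 = n-1+N from by omega] at h
      simpa only [hcdef, hcos n] using h
    · intro n hn
      have h1 := hP n hn x
      have h2 := hQ n hn x
      simp only [hcdef]
      linear_combination (P N x) * h1 + ((P (N+1) x - P N x * (2*x-2*a))/2) * h2
    · simp [hP0, hQ0]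
    · rw [show 1+N = N+1 from by omega, hP1, hQ1]; ring
  have hexpQ : ∀ n, Pstar (n+N) x = Pstar N x * P n x
      + ((Pstar (N+1) x - Pstar N x * (2*x-2*a))/2) * Pstar n x := by
    apply seq_uniq c x
    · intro n hn
      have h := hQ (n+N) (by omega) x
      rw [show n+N+1 = n+1+N from by omega, show n+N-1 = n-1+N from by omega] at h
      simpa only [hcdef, hcos n] using h
    · intro n hn
      have h1 := hP n hn x
      have h2 := hQ n hn x
      simp only [hcdef]
      linear_combination (Pstar N x) * h1 + ((Pstar (N+1) x - Pstar N x * (2*x-2*a))/2) * h2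
    · simp [hP0, hQ0]
    · rw [show 1+N = N+1 from by omega, hP1, hQ1]; ring
  -- relations from the recurrence at n = N
  have hrecN := hP N hN x
  have hrecNQ := hQ N hN x
  rw [hcN] at hrecN hrecNQ
  have hbp : (P (N+1) x - P N x * (2*x-2*a))/2 = - P (N-1) x / 2 := by linarith
  have hbq : (Pstar (N+1) x - Pstar N x * (2*x-2*a))/2 = - Pstar (N-1) x / 2 := by linarith
  -- Wronskian
  have hWall : ∀ n, P (n+1) x * Pstar n x - P n x * Pstar (n+1) x = -2 := by
    intro n
    induction n with
    | zero => simp [hP0, hP1, hQ0, hQ1]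
    | succ n ih =>
      have h1 := hP (n+1) (Nat.le_add_left 1 n) x
      have h2 := hQ (n+1) (Nat.le_add_left 1 n) x
      simp only [Nat.add_sub_cancel] at h1 h2
      linear_combination P (n+1) x * h2 - Pstar (n+1) x * h1 + ih
  have hW : P N x * Pstar (N-1) x - P (N-1) x * Pstar N x = -2 := by
    have := hWall (N-1)
    rwa [show N-1+1 = N from by omega] at this
  -- the key two-period identity
  have key : ∀ m, P (m + 2*N) x = 2 * g x * P (m+N) x - P m x := by
    intro m
    rw [show m + 2*N = (m+N)+N from by ring, hexpP (m+N), hexpP m, hexpQ m, hg x,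
      hbp, hbq]
    linear_combination (P m x / 2) * hW
  -- Chebyshev recurrence, evaluated
  have cheb : ∀ n : ℤ, (Chebyshev.U ℝ (n+2)).eval (g x)
      = 2 * g x * (Chebyshev.U ℝ (n+1)).eval (g x) - (Chebyshev.U ℝ n).eval (g x) := by
    intro n
    rw [Chebyshev.U_add_two]
    simp [eval_sub, eval_mul]
  -- main induction
  have main : ∀ i : ℕ, P (k + (i+1)*N) x
      = P (k+N) x * (Chebyshev.U ℝ (i:ℤ)).eval (g x)
        - P k x * (Chebyshev.U ℝ ((i:ℤ)-1)).eval (g x) := by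
    intro i
    induction i using Nat.twoStepInduction with
    | zero => simp [Chebyshev.U_zero, Chebyshev.U_neg_one]
    | one =>
      have := key k
      rw [show k + 2*N = k + (1+1)*N from by ring] at this
      rw [this]
      simp [Chebyshev.U_one, Chebyshev.U_zero]
      ring
    | more n ih1 ih2 =>
      have hk := key (k+(n+1)*N)
      rw [show k+(n+1)*N + 2*N = k + (n+2+1)*N from by ring,
        show k+(n+1)*N + N = k + (n+1+1)*N from by ring] at hk
      have c1 := cheb n
      have c2 := cheb ((n:ℤ)-1)
      rw [show (n:ℤ)-1+2 = (n:ℤ)+1 from by ring, show (n:ℤ)-1+1 = (n:ℤ) from by ring] at c2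
      have e2 : ((n+1:ℕ):ℤ) = (n:ℤ)+1 := by push_cast; ring
      have e3 : ((n+2:ℕ):ℤ) = (n:ℤ)+2 := by push_cast; ring
      rw [hk, ih1, ih2, e2, e3, show (n:ℤ)+2-1 = (n:ℤ)+1 from by ring,
        show (n:ℤ)+1-1 = (n:ℤ) from by ring, c1, c2]
      ring
  obtain ⟨i, rfl⟩ : ∃ i, j = i + 1 := ⟨j - 1, by omega⟩
  have := main i
  rw [this]
  push_cast
  ring_nf
end

section
/- For all k ≥ 0 and j ≥ 1, the numerator polynomials satisfy P*_{k+jN}(x) = P*_{k+N}(x)·U_{j−1}(g_N(x)) − P*_k(x)·U_{j−2}(g_N(x)), with U_{−1} = 0. -/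
open Polynomial Polynomial.Chebyshev

theorem Pstar_shift_chebyshev (a : ℝ) (N : ℕ) (hN : 0 < N)
    (P Pstar : ℕ → ℝ → ℝ)
    (hP0 : ∀ x, P 0 x = 1) (hP1 : ∀ x, P 1 x = 2*x - 2*a)
    (hP : ∀ n : ℕ, 1 ≤ n → ∀ x,
      2*x*P n x = P (n+1) x + 2*a*Real.cos (2*Real.pi*n/N) * P n x + P (n-1) x)
    (hQ0 : ∀ x, Pstar 0 x = 0) (hQ1 : ∀ x, Pstar 1 x = 2)
    (hQ : ∀ n : ℕ, 1 ≤ n → ∀ x,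
      2*x*Pstar n x = Pstar (n+1) x + 2*a*Real.cos (2*Real.pi*n/N) * Pstar n x + Pstar (n-1) x)
    (g : ℝ → ℝ) (hg : ∀ x, g x = (P N x - Pstar (N-1) x / 2) / 2) :
    ∀ (k : ℕ) (j : ℕ), 1 ≤ j → ∀ x,
      Pstar (k + j*N) x = Pstar (k + N) x * (Chebyshev.U ℝ ((j:ℤ) - 1)).eval (g x)
        - Pstar k x * (Chebyshev.U ℝ ((j:ℤ) - 2)).eval (g x) := by
  have hN' : (N:ℝ) ≠ 0 := Nat.cast_ne_zero.mpr hN.ne'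
  intro k j hj x
  -- the coefficient function and its N-periodicity
  set t : ℕ → ℝ := fun n => 2*x - 2*a*Real.cos (2*Real.pi*n/N) with ht_def
  have ht : ∀ n : ℕ, t (n + N) = t n := by
    intro n
    have e : 2*Real.pi*((n:ℝ)+(N:ℝ))/N = 2*Real.pi*n/N + 2*Real.pi := by
      field_simp
    simp only [ht_def]
    push_cast
    rw [e, Real.cos_add_two_pi]
  -- forward form of the recurrences
  have hPs : ∀ n : ℕ, P (n+2) x = t (n+1) * P (n+1) x - P n x := by
    intro n
    have h := hP (n+1) (by omega) x
    simp only [Nat.add_sub_cancel] at h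
    simp only [ht_def]
    linarith
  have hQs : ∀ n : ℕ, Pstar (n+2) x = t (n+1) * Pstar (n+1) x - Pstar n x := by
    intro n
    have h := hQ (n+1) (by omega) x
    simp only [Nat.add_sub_cancel] at h
    simp only [ht_def]
    linarith
  -- Wronskian
  have hW : ∀ n : ℕ, P (n+1) x * Pstar n x - P n x * Pstar (n+1) x = -2 := by
    intro n
    induction n with
    | zero => rw [hP0, hP1, hQ0, hQ1]; ring
    | succ m ih =>
      rw [hPs m, hQs m]
      linear_combination ih
  -- representation of shifted sequences in the basis (P, Pstar)
  set A := Pstar N x with hA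
  set B := (Pstar (N+1) x - Pstar N x * (2*x-2*a))/2 with hB
  set C := P N x with hC
  set D := (P (N+1) x - P N x * (2*x-2*a))/2 with hD
  have hRQ : ∀ m : ℕ, Pstar (m+N) x = A * P m x + B * Pstar m x := by
    intro m
    induction m using Nat.twoStepInduction with
    | zero => rw [hP0, hQ0]; simp [hA]
    | one => rw [hP1, hQ1, hB, hA]; ring
    | more m ih1 ih2 =>
      have e : m + 2 + N = (m + N) + 2 := by omega
      have e2 : m + 1 + N = (m + N) + 1 := by omega
      rw [e2] at ih2
      have ec : t (m + N + 1) = t (m + 1) := by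
        have e3 : m + N + 1 = (m + 1) + N := by omega
        rw [e3, ht]
      rw [e, hQs (m+N), hQs m, hPs m, ec]
      linear_combination t (m+1) * ih2 - ih1
  have hRP : ∀ m : ℕ, P (m+N) x = C * P m x + D * Pstar m x := by
    intro m
    induction m using Nat.twoStepInduction with
    | zero => rw [hP0, hQ0]; simp [hC]
    | one => rw [hP1, hQ1, hD, hC]; ring
    | more m ih1 ih2 =>
      have e : m + 2 + N = (m + N) + 2 := by omega
      have e2 : m + 1 + N = (m + N) + 1 := by omega
      rw [e2] at ih2
      have ec : t (m + N + 1) = t (m + 1) := by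
        have e3 : m + N + 1 = (m + 1) + N := by omega
        rw [e3, ht]
      rw [e, hPs (m+N), hQs m, hPs m, ec]
      linear_combination t (m+1) * ih2 - ih1
  -- trace identity : 2 g = C + B
  have hcosN : Real.cos (2*Real.pi*(N:ℝ)/N) = 1 := by
    have e : 2*Real.pi*(N:ℝ)/N = 2*Real.pi := by field_simp
    rw [e, Real.cos_two_pi]
  have h2g : 2 * g x = C + B := by
    have hrecN := hQ N hN x
    rw [hcosN] at hrecN
    rw [hg x]
    rw [hC, hB]
    linear_combination (1/2 : ℝ) * hrecN
  -- determinant identity : A*D - C*B = -1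
  have hdet : A * D - C * B = -1 := by
    rw [hA, hB, hC, hD]
    linear_combination (1/2 : ℝ) * hW N
  -- key recurrence
  have hKey : ∀ m : ℕ, Pstar (m + 2*N) x = 2 * g x * Pstar (m + N) x - Pstar m x := by
    intro m
    have e : m + 2*N = (m + N) + N := by omega
    rw [e, hRQ (m+N), hRQ m, hRP m]
    linear_combination (-(A * P m x + B * Pstar m x)) * h2g + Pstar m x * hdet
  -- Chebyshev eval recurrence
  have hU : ∀ n : ℤ, (Chebyshev.U ℝ (n+2)).eval (g x)
      = 2 * g x * (Chebyshev.U ℝ (n+1)).eval (g x) - (Chebyshev.U ℝ n).eval (g x) := by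
    intro n
    rw [Chebyshev.U_add_two]
    simp [eval_sub, eval_mul]
  -- main induction
  have H : ∀ jj : ℕ,
      (Pstar (k + (jj+1)*N) x = Pstar (k + N) x * (Chebyshev.U ℝ (((jj+1:ℕ):ℤ) - 1)).eval (g x)
        - Pstar k x * (Chebyshev.U ℝ (((jj+1:ℕ):ℤ) - 2)).eval (g x)) ∧
      (Pstar (k + (jj+2)*N) x = Pstar (k + N) x * (Chebyshev.U ℝ (((jj+2:ℕ):ℤ) - 1)).eval (g x)
        - Pstar k x * (Chebyshev.U ℝ (((jj+2:ℕ):ℤ) - 2)).eval (g x)) := by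
    intro jj
    induction jj with
    | zero =>
      constructor
      · have e1 : (((0+1:ℕ)):ℤ) - 1 = 0 := by norm_num
        have e2 : (((0+1:ℕ)):ℤ) - 2 = -1 := by norm_num
        rw [e1, e2, Chebyshev.U_zero, Chebyshev.U_neg_one]
        simp
      · have e1 : (((0+2:ℕ)):ℤ) - 1 = 1 := by norm_num
        have e2 : (((0+2:ℕ)):ℤ) - 2 = 0 := by norm_num
        rw [e1, e2, Chebyshev.U_one, Chebyshev.U_zero]
        simp only [eval_one, eval_mul, eval_ofNat, eval_X]
        have ek : k + (0+2)*N = k + 2*N := by omega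
        rw [ek]
        linear_combination hKey k
    | succ m ih =>
      refine ⟨ih.2, ?_⟩
      have e : k + (m+3)*N = (k + (m+1)*N) + 2*N := by ring
      have hk := hKey (k + (m+1)*N)
      have e2 : k + (m+1)*N + N = k + (m+2)*N := by ring
      rw [e2] at hk
      rw [e, hk, ih.2, ih.1]
      have ea : (((m+3:ℕ)):ℤ) - 1 = (m:ℤ) + 2 := by push_cast; ring
      have eb : (((m+3:ℕ)):ℤ) - 2 = (m:ℤ) + 1 := by push_cast; ring
      have ec : (((m+2:ℕ)):ℤ) - 1 = (m:ℤ) + 1 := by push_cast; ring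
      have ed : (((m+2:ℕ)):ℤ) - 2 = (m:ℤ) := by push_cast; ring
      have ee : (((m+1:ℕ)):ℤ) - 1 = (m:ℤ) := by push_cast; ring
      have ef : (((m+1:ℕ)):ℤ) - 2 = (m:ℤ) - 1 := by push_cast; ring
      rw [ea, eb, ec, ed, ee, ef]
      have h1 := hU (m:ℤ)
      have h2 := hU ((m:ℤ) - 1)
      rw [show ((m:ℤ)-1)+2 = (m:ℤ)+1 by ring, show ((m:ℤ)-1)+1 = (m:ℤ) by ring] at h2
      linear_combination (-(Pstar (k+N) x)) * h1 + Pstar k x * h2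
  obtain ⟨j', rfl⟩ : ∃ j', j = j' + 1 := ⟨j - 1, by omega⟩
  exact (H j').1
end

section
/- If x_k is a zero of P_N(x), then P_{N-1}(x_k)·P_N*(x_k) = 2; in particular P_{N-1}(x_k) ≠ 0 and P_N*(x_k) ≠ 0. -/
theorem zeros_of_PN_property (a : ℝ) (N : ℕ) (hN : 0 < N)
    (P Pstar : ℕ → ℝ → ℝ)
    (hP0 : ∀ x, P 0 x = 1) (hP1 : ∀ x, P 1 x = 2*x - 2*a)
    (hP : ∀ n : ℕ, 1 ≤ n → ∀ x,
      2*x*P n x = P (n+1) x + 2*a*Real.cos (2*Real.pi*n/N) * P n x + P (n-1) x)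
    (hQ0 : ∀ x, Pstar 0 x = 0) (hQ1 : ∀ x, Pstar 1 x = 2)
    (hQ : ∀ n : ℕ, 1 ≤ n → ∀ x,
      2*x*Pstar n x = Pstar (n+1) x + 2*a*Real.cos (2*Real.pi*n/N) * Pstar n x + Pstar (n-1) x) :
    ∀ xk : ℝ, P N xk = 0 →
      P (N-1) xk * Pstar N xk = 2 ∧ P (N-1) xk ≠ 0 ∧ Pstar N xk ≠ 0 := by
  intro xk hzero
  have key : ∀ n : ℕ, P n xk * Pstar (n+1) xk - P (n+1) xk * Pstar n xk = 2 := by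
    intro n
    induction n with
    | zero => simp [hP0, hP1, hQ0, hQ1]
    | succ m ih =>
      have hp := hP (m+1) (by omega) xk
      have hq := hQ (m+1) (by omega) xk
      simp only [Nat.add_sub_cancel] at hp hq
      linear_combination ih - P (m+1) xk * hq + Pstar (m+1) xk * hp
  have h := key (N-1)
  rw [Nat.sub_add_cancel hN] at h
  rw [hzero] at h
  have hmain : P (N-1) xk * Pstar N xk = 2 := by linarith
  refine ⟨hmain, ?_, ?_⟩
  · intro h0; rw [h0] at hmain; norm_num at hmain
  · intro h0; rw [h0] at hmain; norm_num at hmain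
end

section
/- If y is a real zero of P_{N-1}(x), then P_N(y)·P_{N-1}*(y) = −2 and |P_N(y) − P_{N-1}*(y)/2| = |P_N(y) + 1/P_N(y)| ≥ 2; equivalently |g_N(y)| ≥ 1. -/
theorem zeros_of_PNminus1_property (a : ℝ) (N : ℕ) (hN : 2 ≤ N)
    (P Pstar : ℕ → ℝ → ℝ)
    (hP0 : ∀ x, P 0 x = 1) (hP1 : ∀ x, P 1 x = 2*x - 2*a)
    (hP : ∀ n : ℕ, 1 ≤ n → ∀ x,
      2*x*P n x = P (n+1) x + 2*a*Real.cos (2*Real.pi*n/N) * P n x + P (n-1) x)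
    (hQ0 : ∀ x, Pstar 0 x = 0) (hQ1 : ∀ x, Pstar 1 x = 2)
    (hQ : ∀ n : ℕ, 1 ≤ n → ∀ x,
      2*x*Pstar n x = Pstar (n+1) x + 2*a*Real.cos (2*Real.pi*n/N) * Pstar n x + Pstar (n-1) x)
    (g : ℝ → ℝ) (hg : ∀ x, g x = (P N x - Pstar (N-1) x / 2) / 2) :
    ∀ y : ℝ, P (N-1) y = 0 →
      P N y * Pstar (N-1) y = -2 ∧
      |P N y - Pstar (N-1) y / 2| = |P N y + 1 / P N y| ∧
      |P N y + 1 / P N y| ≥ 2 ∧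
      |g y| ≥ 1 := by
  have key : ∀ n : ℕ, 1 ≤ n → ∀ x,
      P n x * Pstar (n-1) x - P (n-1) x * Pstar n x = -2 := by
    intro n hn
    induction n with
    | zero => omega
    | succ m ih =>
      intro x
      rcases Nat.lt_or_ge m 1 with hm | hm
      · interval_cases m
        simp [hP0, hP1, hQ0, hQ1]
      · have h1 := hP m hm x
        have h2 := hQ m hm x
        have ih' := ih hm x
        have hms : m + 1 - 1 = m := rfl
        rw [hms]
        linear_combination P m x * h2 - Pstar m x * h1 + ih'
  intro y hy
  have hC := key N (by omega) y
  rw [hy] at hC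
  have hps : P N y * Pstar (N-1) y = -2 := by linarith
  have hp0 : P N y ≠ 0 := by
    intro h; rw [h] at hps; norm_num at hps
  have hs : Pstar (N-1) y = -2 / P N y := by
    field_simp
    linarith
  have heq : P N y - Pstar (N-1) y / 2 = P N y + 1 / P N y := by
    rw [hs]; field_simp; ring
  have hinv : P N y * (1 / P N y) = 1 := by field_simp
  have habs : |P N y + 1 / P N y| ≥ 2 := by
    rcases lt_or_gt_of_ne hp0 with h | h
    · have h1 : 1 / P N y < 0 := one_div_neg.mpr h
      have : P N y + 1 / P N y ≤ -2 := by
        nlinarith [sq_nonneg (P N y + 1)]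
      rw [abs_of_nonpos (by linarith)]; linarith
    · have : P N y + 1 / P N y ≥ 2 := by
        nlinarith [sq_nonneg (P N y - 1)]
      rw [abs_of_nonneg (by linarith)]; linarith
  refine ⟨hps, by rw [heq], habs, ?_⟩
  rw [hg, heq]
  rw [show (P N y + 1 / P N y) / 2 = (P N y + 1 / P N y) * (1/2) by ring,
    abs_mul]
  rw [abs_of_nonneg (by norm_num : (0:ℝ) ≤ 1/2)]
  linarith
end

section
/- With b as above and a > 0, one has P_{k+1}(b) − P_k(b) ≥ P_k(b) − P_{k-1}(b) ≥ 1 and P_k(b) > 0 for all k ≥ 0 (with P_{-1}(b) = 0). -/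
theorem growth_at_b (a : ℝ) (ha : 0 < a) (N : ℕ) (hN : 0 < N)
    (P : ℤ → ℝ → ℝ)
    (hPm1 : ∀ x, P (-1) x = 0)
    (hP0 : ∀ x, P 0 x = 1) (hP1 : ∀ x, P 1 x = 2*x - 2*a)
    (hP : ∀ n : ℤ, 1 ≤ n → ∀ x,
      2*x*P n x = P (n+1) x + 2*a*Real.cos (2*Real.pi*n/N) * P n x + P (n-1) x)
    (b : ℝ) (hb : b = if 1 ≤ a then 1 + a else 2) :
    ∀ k : ℤ, 0 ≤ k →
      P (k+1) b - P k b ≥ P k b - P (k-1) b ∧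
      P k b - P (k-1) b ≥ 1 ∧
      P k b > 0 := by
  have hb2 : b ≥ 1 + a := by
    rw [hb]; split_ifs with h
    · linarith
    · push_neg at h; linarith
  have hc : ∀ n : ℤ, 2*b - 2*a*Real.cos (2*Real.pi*n/N) ≥ 2 := by
    intro n
    have h1 : Real.cos (2*Real.pi*n/N) ≤ 1 := Real.cos_le_one _
    nlinarith
  intro k hk
  refine Int.le_induction (motive := fun n _ => P (n+1) b - P n b ≥ P n b - P (n-1) b ∧
      P n b - P (n-1) b ≥ 1 ∧ P n b > 0) ?_ (fun k hk ih => ?_) k hk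
  · norm_num [hP1, hP0, hPm1]
    linarith
  · obtain ⟨h1, h2, h3⟩ := ih
    have hrec := hP (k+1) (by linarith) b
    have hcc := hc (k+1)
    have hpos : P (k+1) b > 0 := by linarith
    have e1 : (k : ℤ) + 1 - 1 = k := by ring
    rw [e1] at hrec
    rw [e1]
    refine ⟨by nlinarith, by nlinarith, hpos⟩
end

section
/- For N ≥ 2 and a > 0, g_N(b) > 1, where b = 1 + a if a ≥ 1 and b = 2 if a ≤ 1; equivalently P_{2N-1}(b) − 2·P_{N-1}(b) > 0. -/
/-- Invariants for the transfer-matrix entries of the three-term recurrence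
`P (k+2) = m (k+1) * P (k+1) - P k` with all `m n ≥ 2` and `m 1 > 2`. -/
lemma gN_aux_inv (m PP QQ : ℕ → ℝ)
    (hm : ∀ n, 2 ≤ m n) (hm1 : 2 < m 1)
    (hP0 : PP 0 = 1) (hP1 : PP 1 = m 0)
    (hQ0 : QQ 0 = 0) (hQ1 : QQ 1 = 2)
    (hP : ∀ k, PP (k+2) = m (k+1) * PP (k+1) - PP k)
    (hQ : ∀ k, QQ (k+2) = m (k+1) * QQ (k+1) - QQ k) :
    ∀ k, 1 ≤ PP k - QQ k / 2 ∧ 1 ≤ PP k ∧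
      PP k - QQ k / 2 ≤ PP (k+1) - QQ (k+1) / 2 ∧
      1 ≤ PP (k+1) - PP k ∧ (1 ≤ k → 1 < PP (k+1) - PP k) := by
  intro k
  induction k with
  | zero =>
    have h0 := hm 0
    refine ⟨by norm_num [hP0, hQ0], by norm_num [hP0], ?_, ?_, fun h => absurd h (by norm_num)⟩
    · rw [hP0, hP1, hQ0, hQ1]; linarith
    · rw [hP0, hP1]; linarith
  | succ k ih =>
    obtain ⟨hα, hβ, hγ, hδ, hδs⟩ := ih
    have hmk := hm (k+1)
    have hPk := hP k
    have hQk := hQ k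
    have hα' : 1 ≤ PP (k+1) - QQ (k+1) / 2 := by linarith
    have hβ' : 1 ≤ PP (k+1) := by linarith
    have hγ' : PP (k+1) - QQ (k+1) / 2 ≤ PP (k+2) - QQ (k+2) / 2 := by
      have h1 : (m (k+1) - 2) * (PP (k+1) - QQ (k+1) / 2) ≥ 0 := by
        apply mul_nonneg <;> linarith
      rw [hPk, hQk]; nlinarith
    have hδ' : 1 ≤ PP (k+2) - PP (k+1) := by
      have h1 : (m (k+1) - 2) * PP (k+1) ≥ 0 := by
        apply mul_nonneg <;> linarith
      rw [hPk]; nlinarith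
    refine ⟨hα', hβ', hγ', hδ', fun _ => ?_⟩
    rcases Nat.eq_zero_or_pos k with hk0 | hk1
    · subst hk0
      have h1 : (m 1 - 2) * PP 1 > 0 := by
        apply mul_pos <;> linarith
      rw [hP 0]; nlinarith
    · have hs := hδs hk1
      have h1 : (m (k+1) - 2) * PP (k+1) ≥ 0 := by
        apply mul_nonneg <;> linarith
      rw [hPk]; nlinarith

/-- Composition identity: if the coefficients are `N`-periodic, then
`P (k + N) = P N * P k - (P (N-1) / 2) * Q k`. Here `N = K + 1`. -/
lemma gN_aux_id (m PP QQ : ℕ → ℝ) (K : ℕ)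
    (hper : ∀ n, m (n + (K+1)) = m n)
    (hP0 : PP 0 = 1) (hP1 : PP 1 = m 0)
    (hQ0 : QQ 0 = 0) (hQ1 : QQ 1 = 2)
    (hP : ∀ k, PP (k+2) = m (k+1) * PP (k+1) - PP k)
    (hQ : ∀ k, QQ (k+2) = m (k+1) * QQ (k+1) - QQ k) :
    ∀ k, PP (k + (K+1)) = PP (K+1) * PP k - (PP K / 2) * QQ k := by
  have main : ∀ k, (PP (k + (K+1)) = PP (K+1) * PP k - (PP K / 2) * QQ k) ∧
      (PP (k+1 + (K+1)) = PP (K+1) * PP (k+1) - (PP K / 2) * QQ (k+1)) := by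
    intro k
    induction k with
    | zero =>
      constructor
      · simp [hP0, hQ0]
      · have h1 : PP (1 + (K+1)) = PP (K + 2) := by ring_nf
        have h2 := hP K
        have h3 : m (K+1) = m 0 := by
          have := hper 0; simpa using this
        rw [h1, h2, h3, hP1, hQ1]
        ring
    | succ k ih =>
      obtain ⟨ih0, ih1⟩ := ih
      refine ⟨ih1, ?_⟩
      have h1 : PP (k + 2 + (K+1)) = PP ((k + (K+1)) + 2) := by ring_nf
      have h2 := hP (k + (K+1))
      have h3 : m (k + (K+1) + 1) = m (k+1) := by
        have := hper (k+1); rw [← this]; ring_nf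
      have h4 : k + (K+1) + 1 = k + 1 + (K+1) := by ring
      rw [h1, h2, h3, h4, ih1, ih0, hP k, hQ k]
      ring
  exact fun k => (main k).1

theorem gN_at_b_gt_one (a : ℝ) (ha : 0 < a) (N : ℕ) (hN : 2 ≤ N)
    (P Pstar : ℕ → ℝ → ℝ)
    (hP0 : ∀ x, P 0 x = 1) (hP1 : ∀ x, P 1 x = 2*x - 2*a)
    (hP : ∀ n : ℕ, 1 ≤ n → ∀ x,
      2*x*P n x = P (n+1) x + 2*a*Real.cos (2*Real.pi*n/N) * P n x + P (n-1) x)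
    (hQ0 : ∀ x, Pstar 0 x = 0) (hQ1 : ∀ x, Pstar 1 x = 2)
    (hQ : ∀ n : ℕ, 1 ≤ n → ∀ x,
      2*x*Pstar n x = Pstar (n+1) x + 2*a*Real.cos (2*Real.pi*n/N) * Pstar n x + Pstar (n-1) x)
    (g : ℝ → ℝ) (hg : ∀ x, g x = (P N x - Pstar (N-1) x / 2) / 2)
    (b : ℝ) (hb : b = if 1 ≤ a then 1 + a else 2) :
    g b > 1 ∧ P (2*N - 1) b - 2 * P (N-1) b > 0 := by
  have hNpos : (0:ℝ) < N := by positivity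
  -- basic bound: 2 ≤ 2*b - 2*a
  have hba : 2 ≤ 2*b - 2*a := by
    rw [hb]; split_ifs with h <;> linarith
  set m : ℕ → ℝ := fun n => 2*b - 2*a*Real.cos (2*Real.pi*n/N) with hm_def
  have hm : ∀ n, 2 ≤ m n := by
    intro n
    have h1 : Real.cos (2*Real.pi*n/N) ≤ 1 := Real.cos_le_one _
    have : 2*a*Real.cos (2*Real.pi*n/N) ≤ 2*a := by nlinarith
    simp only [hm_def]; linarith
  have hm1 : 2 < m 1 := by
    have hx : (0:ℝ) < 2*Real.pi*(1:ℕ)/N := by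
      have := Real.pi_pos; positivity
    have hxle : 2*Real.pi*(1:ℕ)/N ≤ Real.pi := by
      rw [div_le_iff₀ hNpos]
      have h2 : (2:ℝ) ≤ N := by exact_mod_cast hN
      have hpi := Real.pi_pos
      push_cast
      nlinarith
    have hcos : Real.cos (2*Real.pi*(1:ℕ)/N) < 1 := by
      have := Real.cos_lt_cos_of_nonneg_of_le_pi (le_refl (0:ℝ)) hxle hx
      simpa using this
    have : 2*a*Real.cos (2*Real.pi*(1:ℕ)/N) < 2*a := by nlinarith
    simp only [hm_def]; push_cast; push_cast at this; linarith
  have hper : ∀ n, m (n + N) = m n := by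
    intro n
    simp only [hm_def]
    congr 1
    have harg : 2*Real.pi*((n:ℝ)+N)/N = 2*Real.pi*n/N + 2*Real.pi := by
      field_simp
    push_cast
    rw [harg, Real.cos_add_two_pi]
  -- recurrences in normal form
  have hPrec : ∀ k : ℕ, P (k+2) b = m (k+1) * P (k+1) b - P k b := by
    intro k
    have h := hP (k+1) (by omega) b
    simp only [Nat.add_sub_cancel] at h
    simp only [hm_def]
    push_cast at h ⊢
    linarith
  have hQrec : ∀ k : ℕ, Pstar (k+2) b = m (k+1) * Pstar (k+1) b - Pstar k b := by
    intro k
    have h := hQ (k+1) (by omega) b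
    simp only [Nat.add_sub_cancel] at h
    simp only [hm_def]
    push_cast at h ⊢
    linarith
  have hP1b : P 1 b = m 0 := by
    simp only [hm_def]
    rw [hP1]
    norm_num
  obtain ⟨K, rfl⟩ : ∃ K, N = K + 1 := ⟨N - 1, by omega⟩
  have hK : 1 ≤ K := by omega
  have hinv := gN_aux_inv m (fun n => P n b) (fun n => Pstar n b) hm hm1
    (hP0 b) hP1b (hQ0 b) (hQ1 b) hPrec hQrec
  obtain ⟨hα, hβ, _, hδ, hδs⟩ := hinv K
  have hδK := hδs hK
  -- trace > 2
  have htr : 2 < P (K+1) b - Pstar K b / 2 := by linarith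
  have hid := gN_aux_id m (fun n => P n b) (fun n => Pstar n b) K hper
    (hP0 b) hP1b (hQ0 b) (hQ1 b) hPrec hQrec K
  have h2N : 2*(K+1) - 1 = K + (K+1) := by omega
  have hNm1 : K + 1 - 1 = K := by omega
  constructor
  · rw [hg, hNm1]
    linarith
  · rw [h2N, hNm1, hid]
    nlinarith
end

section
/- P_N(x) = P_{N+1}*(x)/2 as polynomials; i.e., the monic tridiagonal matrices with diagonals a·cos(2(j−1)π/N), j = 1..N, and a·cos(2jπ/N), j = 1..N, off-diagonals 1/2, have the same characteristic polynomial. -/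
open Matrix

private def Mm (d : ℝ) : Matrix (Fin 2) (Fin 2) ℝ := !![d, -1; 1, 0]
private def Kd : Matrix (Fin 2) (Fin 2) ℝ := !![1, 0; 0, -1]

private lemma Kd_mul_Kd : Kd * Kd = 1 := by
  ext i j
  fin_cases i <;> fin_cases j <;>
    simp [Kd, Matrix.mul_apply, Fin.sum_univ_two, Matrix.one_apply]

private lemma Mm_transpose (d : ℝ) : (Mm d)ᵀ = Kd * Mm d * Kd := by
  ext i j
  fin_cases i <;> fin_cases j <;>
    simp [Mm, Kd, Matrix.mul_apply, Fin.sum_univ_two]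

private lemma Mm_mul_00 (e : ℝ) (A : Matrix (Fin 2) (Fin 2) ℝ) :
    (Mm e * A) 0 0 = e * A 0 0 - A 1 0 := by
  simp [Mm, Matrix.mul_apply, Fin.sum_univ_two]; ring

private lemma Mm_mul_10 (e : ℝ) (A : Matrix (Fin 2) (Fin 2) ℝ) :
    (Mm e * A) 1 0 = A 0 0 := by
  simp [Mm, Matrix.mul_apply, Fin.sum_univ_two]

private lemma mul_Mm_00 (A : Matrix (Fin 2) (Fin 2) ℝ) (e : ℝ) :
    (A * Mm e) 0 0 = A 0 0 * e + A 0 1 := by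
  simp [Mm, Matrix.mul_apply, Fin.sum_univ_two]

private def Fprod (d : ℕ → ℝ) : ℕ → Matrix (Fin 2) (Fin 2) ℝ
  | 0 => 1
  | k+1 => Mm (d (k+1)) * Fprod d k

private def Gprod (d : ℕ → ℝ) (N : ℕ) : ℕ → Matrix (Fin 2) (Fin 2) ℝ
  | 0 => 1
  | k+1 => Gprod d N k * Mm (d (N-1-k))

private lemma Fprod_eq_Gprod (d : ℕ → ℝ) : ∀ k, Fprod d k = Gprod d (k+1) k := by
  intro k
  induction k with
  | zero => rfl
  | succ k ih =>
    have hG : ∀ n m, Gprod d (n+1) (m+1) = Mm (d n) * Gprod d n m := by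
      intro n m
      induction m with
      | zero =>
        show Gprod d (n+1) 0 * Mm (d (n+1-1-0)) = Mm (d n) * Gprod d n 0
        simp [Gprod]
      | succ m ihm =>
        show Gprod d (n+1) (m+1) * Mm (d (n+1-1-(m+1))) = Mm (d n) * (Gprod d n m * Mm (d (n-1-m)))
        have he : n+1-1-(m+1) = n-1-m := by omega
        rw [he, ihm, mul_assoc]
    show Mm (d (k+1)) * Fprod d k = Gprod d (k+2) (k+1)
    rw [ih, hG (k+1) k]

private lemma Fprod_transpose (d : ℕ → ℝ) (N : ℕ)
    (hpal : ∀ j, 1 ≤ j → j ≤ N - 1 → d (N - j) = d j) :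
    ∀ k, k ≤ N - 1 → (Fprod d k)ᵀ = Kd * Gprod d N k * Kd := by
  intro k
  induction k with
  | zero =>
    intro _
    show (1 : Matrix (Fin 2) (Fin 2) ℝ)ᵀ = Kd * (1 : Matrix (Fin 2) (Fin 2) ℝ) * Kd
    rw [Matrix.transpose_one, mul_one, Kd_mul_Kd]
  | succ k ih =>
    intro hk
    have hk' : k ≤ N - 1 := by omega
    show (Mm (d (k+1)) * Fprod d k)ᵀ = Kd * (Gprod d N k * Mm (d (N-1-k))) * Kd
    rw [Matrix.transpose_mul, ih hk', Mm_transpose]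
    have hd : d (N - 1 - k) = d (k+1) := by
      have h1 : N - 1 - k = N - (k+1) := by omega
      rw [h1]
      exact hpal (k+1) (by omega) hk
    rw [hd]
    -- (Kd * G * Kd) * (Kd * M * Kd) = Kd * (G * M) * Kd
    rw [show Kd * Gprod d N k * Kd * (Kd * Mm (d (k+1)) * Kd)
        = Kd * Gprod d N k * (Kd * Kd) * Mm (d (k+1)) * Kd by
      simp only [mul_assoc]]
    rw [Kd_mul_Kd, mul_one, mul_assoc, mul_assoc, mul_assoc, mul_assoc]

theorem PN_eq_half_Pstar_Nplus1 (a : ℝ) (N : ℕ) (hN : 0 < N)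
    (P Pstar : ℕ → ℝ → ℝ)
    (hP0 : ∀ x, P 0 x = 1) (hP1 : ∀ x, P 1 x = 2*x - 2*a)
    (hP : ∀ n : ℕ, 1 ≤ n → ∀ x,
      2*x*P n x = P (n+1) x + 2*a*Real.cos (2*Real.pi*n/N) * P n x + P (n-1) x)
    (hQ0 : ∀ x, Pstar 0 x = 0) (hQ1 : ∀ x, Pstar 1 x = 2)
    (hQ : ∀ n : ℕ, 1 ≤ n → ∀ x,
      2*x*Pstar n x = Pstar (n+1) x + 2*a*Real.cos (2*Real.pi*n/N) * Pstar n x + Pstar (n-1) x) :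
    ∀ x, P N x = Pstar (N+1) x / 2 := by
  intro x
  set d : ℕ → ℝ := fun j => 2*x - 2*a*Real.cos (2*Real.pi*j/N) with hd
  have hNR : (N : ℝ) ≠ 0 := Nat.cast_ne_zero.mpr hN.ne'
  have hd0 : d 0 = 2*x - 2*a := by
    simp [hd]
  have hdN : d N = d 0 := by
    simp only [hd]
    rw [mul_div_assoc, div_self hNR, mul_one, Real.cos_two_pi]
    simp
  have hpal : ∀ j, 1 ≤ j → j ≤ N - 1 → d (N - j) = d j := by
    intro j hj1 hj2
    have hjN : j ≤ N := by omega
    simp only [hd]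
    have hcast : ((N - j : ℕ) : ℝ) = (N : ℝ) - (j : ℝ) := by
      push_cast [hjN]; ring
    rw [hcast]
    have : 2*Real.pi*((N:ℝ) - (j:ℝ))/(N:ℝ) = 2*Real.pi - 2*Real.pi*(j:ℝ)/(N:ℝ) := by
      field_simp
    rw [this, Real.cos_two_pi_sub]
  -- recurrence rewritten
  have hPrec : ∀ n : ℕ, P (n+2) x = d (n+1) * P (n+1) x - P n x := by
    intro n
    have := hP (n+1) (by omega) x
    simp only [Nat.add_sub_cancel] at this
    have hcos := this
    simp only [hd]
    push_cast at hcos ⊢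
    linarith [hcos]
  have hQrec : ∀ n : ℕ, Pstar (n+2) x = d (n+1) * Pstar (n+1) x - Pstar n x := by
    intro n
    have := hQ (n+1) (by omega) x
    simp only [Nat.add_sub_cancel] at this
    simp only [hd]
    push_cast at this ⊢
    linarith [this]
  -- P in terms of matrices
  have hPmat : ∀ n, P (n+1) x = (Fprod d n * Mm (d 0)) 0 0
      ∧ P n x = (Fprod d n * Mm (d 0)) 1 0 := by
    intro n
    induction n with
    | zero =>
      constructor
      · show P 1 x = ((1 : Matrix (Fin 2) (Fin 2) ℝ) * Mm (d 0)) 0 0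
        rw [one_mul, hP1, hd0]; simp [Mm]
      · show P 0 x = ((1 : Matrix (Fin 2) (Fin 2) ℝ) * Mm (d 0)) 1 0
        rw [one_mul, hP0]; simp [Mm]
    | succ n ih =>
      obtain ⟨ih1, ih2⟩ := ih
      have hF : Fprod d (n+1) * Mm (d 0) = Mm (d (n+1)) * (Fprod d n * Mm (d 0)) := by
        show Mm (d (n+1)) * Fprod d n * Mm (d 0) = _
        rw [mul_assoc]
      constructor
      · rw [hF, Mm_mul_00, ← ih1, ← ih2, hPrec n]
      · rw [hF, Mm_mul_10, ← ih1]
  -- Pstar in terms of matrices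
  have hQmat : ∀ n, Pstar (n+1) x = 2 * (Fprod d n) 0 0
      ∧ Pstar n x = 2 * (Fprod d n) 1 0 := by
    intro n
    induction n with
    | zero =>
      constructor
      · show Pstar 1 x = 2 * (1 : Matrix (Fin 2) (Fin 2) ℝ) 0 0
        rw [hQ1]; simp [Matrix.one_apply]
      · show Pstar 0 x = 2 * (1 : Matrix (Fin 2) (Fin 2) ℝ) 1 0
        rw [hQ0]; simp [Matrix.one_apply]
    | succ n ih =>
      obtain ⟨ih1, ih2⟩ := ih
      have hF : Fprod d (n+1) = Mm (d (n+1)) * Fprod d n := rfl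
      constructor
      · rw [hF, Mm_mul_00, hQrec n, ih1, ih2]; ring
      · rw [hF, Mm_mul_10, ih1]
  -- key antisymmetry
  set D := Fprod d (N-1) with hDdef
  have hNsub : N - 1 + 1 = N := Nat.succ_pred_eq_of_pos hN
  have hGD : Gprod d N (N-1) = D := by
    rw [hDdef, Fprod_eq_Gprod d (N-1), hNsub]
  have hDT : Dᵀ = Kd * D * Kd := by
    rw [hDdef, Fprod_transpose d N hpal (N-1) le_rfl, hGD]
  have hanti : D 1 0 = - D 0 1 := by
    have := congrFun (congrFun hDT 0) 1
    simp only [Matrix.transpose_apply] at this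
    rw [this]
    simp [Kd, Matrix.mul_apply, Fin.sum_univ_two, Matrix.vecMul, dotProduct]
  -- assemble
  have hPN : P N x = D 0 0 * d 0 + D 0 1 := by
    have h := (hPmat (N-1)).1
    rw [hNsub] at h
    rw [h, ← hDdef, mul_Mm_00]
  have hQN : Pstar (N+1) x = 2 * (d 0 * D 0 0 - D 1 0) := by
    have h := (hQmat N).1
    have hFN : Fprod d N = Mm (d 0) * D := by
      conv_lhs => rw [← hNsub]
      show Mm (d (N-1+1)) * Fprod d (N-1) = _
      rw [hNsub, hdN, hDdef]
    rw [h, hFN, Mm_mul_00]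
  rw [hPN, hQN, hanti]
  ring
end

section
/- As polynomials, (x − a)²·(P_N*(x))² − 4·g_N(x)² = 2·P_{N-1}(x)·P_N*(x) − 4, where g_N(x) = (P_N(x) − P_{N-1}*(x)/2)/2. -/
theorem quadratic_identity (a : ℝ) (N : ℕ) (hN : 0 < N)
    (P Pstar : ℕ → ℝ → ℝ)
    (hP0 : ∀ x, P 0 x = 1) (hP1 : ∀ x, P 1 x = 2*x - 2*a)
    (hP : ∀ n : ℕ, 1 ≤ n → ∀ x,
      2*x*P n x = P (n+1) x + 2*a*Real.cos (2*Real.pi*n/N) * P n x + P (n-1) x)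
    (hQ0 : ∀ x, Pstar 0 x = 0) (hQ1 : ∀ x, Pstar 1 x = 2)
    (hQ : ∀ n : ℕ, 1 ≤ n → ∀ x,
      2*x*Pstar n x = Pstar (n+1) x + 2*a*Real.cos (2*Real.pi*n/N) * Pstar n x + Pstar (n-1) x)
    (g : ℝ → ℝ) (hg : ∀ x, g x = (P N x - Pstar (N-1) x / 2) / 2) :
    ∀ x, (x - a)^2 * (Pstar N x)^2 - 4 * (g x)^2
      = 2 * P (N-1) x * Pstar N x - 4 := by
  intro x
  set d : ℕ → ℝ := fun n => 2*x - 2*a*Real.cos (2*Real.pi*n/N) with hd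
  -- recurrences in convenient form
  have hP' : ∀ m : ℕ, P (m+2) x = d (m+1) * P (m+1) x - P m x := by
    intro m
    have := hP (m+1) (by omega) x
    simp only [Nat.add_sub_cancel] at this
    simp only [hd]
    push_cast
    push_cast at this
    linarith
  have hQ' : ∀ m : ℕ, Pstar (m+2) x = d (m+1) * Pstar (m+1) x - Pstar m x := by
    intro m
    have := hQ (m+1) (by omega) x
    simp only [Nat.add_sub_cancel] at this
    simp only [hd]
    push_cast
    push_cast at this
    linarith
  -- reversed solution t
  set t : ℕ → ℝ := fun n => P n x - (x - a) * Pstar n x with ht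
  have ht0 : t 0 = 1 := by simp [ht, hP0, hQ0]
  have ht1 : t 1 = 0 := by simp [ht, hP1, hQ1]; ring
  have ht' : ∀ m : ℕ, t (m+2) = d (m+1) * t (m+1) - t m := by
    intro m
    simp only [ht, hP' m, hQ' m]
    ring
  -- symmetry of coefficients
  have hdsym : ∀ k : ℕ, k ≤ N → d (N - k) = d k := by
    intro k hk
    simp only [hd]
    congr 1
    congr 1
    have hNk : ((N - k : ℕ) : ℝ) = (N : ℝ) - k := by
      push_cast [Nat.cast_sub hk]; ring
    have hNne : (N : ℝ) ≠ 0 := by positivity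
    rw [hNk]
    have : 2 * Real.pi * ((N : ℝ) - k) / N = 2 * Real.pi - 2 * Real.pi * k / N := by
      field_simp
    rw [this, Real.cos_sub, Real.cos_two_pi, Real.sin_two_pi]
    ring
  -- Wronskian between Pstar and reversed t : constant
  have claim1 : ∀ k : ℕ, k ≤ N - 1 →
      -(Pstar (k+1) x) * t (N - k) + Pstar k x * t (N - k - 1) = -2 * t N := by
    intro k hk
    induction k with
    | zero => simp [hQ0, hQ1]
    | succ k ih =>
      have hk' : k ≤ N - 1 := by omega
      obtain ⟨j, hj⟩ : ∃ j, N - k = j + 2 := ⟨N - k - 2, by omega⟩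
      have ihh := ih hk'
      rw [hj] at ihh
      have e1 : N - (k+1) = j + 1 := by omega
      have e2 : N - (k+1) - 1 = j := by omega
      rw [e2, e1]
      rw [show j + 2 - 1 = j + 1 by omega] at ihh
      have hdj : d (j+1) = d (k+1) := by
        have : j + 1 = N - (k+1) := by omega
        rw [this, hdsym (k+1) (by omega)]
      have h1 := hQ' k
      have h2 := ht' j
      rw [hdj] at h2
      rw [show k+1+1 = k+2 by omega, h1]
      rw [h2] at ihh
      linear_combination ihh
  -- the key identity (x-a) Pstar N = P N + Pstar (N-1) / 2
  have star : Pstar (N-1) x = 2*(x-a) * Pstar N x - 2 * P N x := by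
    have h := claim1 (N-1) le_rfl
    have e1 : N - 1 + 1 = N := by omega
    have e2 : N - (N-1) = 1 := by omega
    have e3 : N - (N-1) - 1 = 0 := by omega
    rw [e3, e2, e1, ht1, ht0] at h
    have : Pstar (N-1) x = -2 * t N := by linarith
    rw [this]
    simp only [ht]
    ring
  -- the constant Wronskian between P and Pstar
  have claim2 : ∀ n : ℕ, P (n+1) x * Pstar n x - P n x * Pstar (n+1) x = -2 := by
    intro n
    induction n with
    | zero => rw [hP0, hP1, hQ0, hQ1]; ring
    | succ n ih =>
      rw [hP' n, hQ' n]
      linear_combination ih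
  have w := claim2 (N-1)
  have e1 : N - 1 + 1 = N := by omega
  rw [e1] at w
  rw [hg x, star] at *
  rw [star] at w
  linear_combination 2 * w
end

section
/- For N = 2 (q = −1): the formal power series P(t) = Σ_{n≥0} P_n(x) t^n equals (t² + 2(x−a)t + 1)/(t⁴ − 2(2x² − 2a² − 1)t² + 1). -/
open PowerSeries

theorem case_N_eq_two_generating_function (a x : ℝ)
    (P : ℕ → ℝ → ℝ)
    (hP0 : ∀ x, P 0 x = 1) (hP1 : ∀ x, P 1 x = 2*x - 2*a)
    (hP : ∀ n : ℕ, 1 ≤ n → ∀ x,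
      2*x*P n x = P (n+1) x + 2*a*(-1:ℝ)^n*P n x + P (n-1) x) :
    PowerSeries.mk (fun n => P n x)
        * (PowerSeries.X^4
           - PowerSeries.C (2*(2*x^2 - 2*a^2 - 1)) * PowerSeries.X^2 + 1)
      = PowerSeries.X^2 + PowerSeries.C (2*(x - a)) * PowerSeries.X + 1 := by
  have c2 : ∀ n : ℕ, P (n+2) x = (2*x - 2*a*(-1:ℝ)^(n+1)) * P (n+1) x - P n x := by
    intro n
    have h := hP (n+1) (by omega) x
    simp only [Nat.add_sub_cancel] at h
    linarith
  have key : ∀ n : ℕ, P (n+4) x = (2*(2*x^2 - 2*a^2 - 1)) * P (n+2) x - P n x := by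
    intro n
    have h1 := c2 n
    have h2 := c2 (n+1)
    have h3 := c2 (n+2)
    have he : ((-1:ℝ)^n)^2 = 1 := by
      rw [← pow_mul, mul_comm, pow_mul]; norm_num
    have s1 : (-1:ℝ)^(n+1) = -(-1:ℝ)^n := by rw [pow_succ]; ring
    have s2 : (-1:ℝ)^(n+1+1) = (-1:ℝ)^n := by rw [pow_succ, pow_succ]; ring
    have s3 : (-1:ℝ)^(n+2+1) = -(-1:ℝ)^n := by
      rw [pow_succ, show n+2 = n+1+1 from rfl, pow_succ, pow_succ]; ring
    rw [s1] at h1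
    rw [s2] at h2
    rw [s3] at h3
    set e : ℝ := (-1:ℝ)^n
    have hee : e * e = 1 := by rw [show e*e = e^2 by ring, he]
    linear_combination h3 + (2*x + 2*a*e)*h2 + h1 - (4*a^2 * P (n+2) x) * hee
  have hP2 : P 2 x = 4*x^2 - 4*a^2 - 1 := by
    have := c2 0
    simp [hP0, hP1] at this
    rw [this]; ring
  have hP3 : P 3 x = (2*x - 2*a) * (4*x^2 - 4*a^2 - 1) - (2*x - 2*a) := by
    have := c2 1
    norm_num [hP1, hP2] at this
    rw [this]; try ring
  have hexp : (PowerSeries.mk (fun n => P n x))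
        * (PowerSeries.X^4
           - PowerSeries.C (2*(2*x^2 - 2*a^2 - 1)) * PowerSeries.X^2 + 1)
      = (PowerSeries.mk (fun n => P n x)) * PowerSeries.X^4
        - PowerSeries.C (2*(2*x^2 - 2*a^2 - 1)) * ((PowerSeries.mk (fun n => P n x)) * PowerSeries.X^2)
        + PowerSeries.mk (fun n => P n x) := by ring
  rw [hexp]
  ext n
  simp only [map_add, map_sub, PowerSeries.coeff_C_mul, PowerSeries.coeff_mul_X_pow',
    PowerSeries.coeff_mk, PowerSeries.coeff_one, PowerSeries.coeff_X_pow,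
    PowerSeries.coeff_X]
  rcases n with _|_|_|_|m
  · norm_num [hP0]
  · norm_num [hP1]; ring
  · norm_num [hP0, hP2]; ring
  · norm_num [hP1, hP3]; ring
  · have h1 : (4:ℕ) ≤ m + 4 := by omega
    have h2 : (2:ℕ) ≤ m + 4 := by omega
    rw [if_pos h1, if_pos h2, if_neg (show ¬(m+1+1+1+1 = 2) by omega),
      if_neg (show ¬(m+1+1+1+1 = 1) by omega), if_neg (show ¬(m+1+1+1+1 = 0) by omega)]
    have hk := key m
    simp only [show m+4-4 = m from rfl, show m+4-2 = m+2 from rfl]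
    linarith [hk]
end

section
/- For N = 4 (q = i): g_4(x)² − 1 = 16x²(x² − a² − 1)(2x² − 2ax − 1)(2x² + 2ax − 1) as polynomials in x, and hence x = 0 is a double root of g_4(x)² = 1. -/
theorem case_N_eq_four_g_squared (a : ℝ)
    (P Pstar : ℕ → ℝ → ℝ)
    (hP0 : ∀ x, P 0 x = 1) (hP1 : ∀ x, P 1 x = 2*x - 2*a)
    (hP : ∀ n : ℕ, 1 ≤ n → ∀ x,
      2*x*P n x = P (n+1) x + 2*a*Real.cos (n*Real.pi/2)*P n x + P (n-1) x)
    (hQ0 : ∀ x, Pstar 0 x = 0) (hQ1 : ∀ x, Pstar 1 x = 2)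
    (hQ : ∀ n : ℕ, 1 ≤ n → ∀ x,
      2*x*Pstar n x = Pstar (n+1) x + 2*a*Real.cos (n*Real.pi/2)*Pstar n x + Pstar (n-1) x)
    (g : ℝ → ℝ) (hg : ∀ x, g x = (P 4 x - Pstar 3 x / 2) / 2) :
    (∀ x, g x ^ 2 - 1
        = 16*x^2*(x^2 - a^2 - 1)*(2*x^2 - 2*a*x - 1)*(2*x^2 + 2*a*x - 1)) ∧
    g 0 ^ 2 - 1 = 0 ∧ HasDerivAt (fun x => g x ^ 2 - 1) 0 0 := by
  have hc1 : Real.cos ((1:ℕ) * Real.pi / 2) = 0 := by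
    norm_num [Real.cos_pi_div_two]
  have hc2 : Real.cos ((2:ℕ) * Real.pi / 2) = -1 := by
    norm_num [Real.cos_pi]
  have hc3 : Real.cos ((3:ℕ) * Real.pi / 2) = 0 := by
    have : ((3:ℕ) : ℝ) * Real.pi / 2 = Real.pi + Real.pi / 2 := by push_cast; ring
    rw [this, Real.cos_add]; simp
  have hP2 : ∀ x, P 2 x = 2*x*(2*x - 2*a) - 1 := by
    intro x
    have h := hP 1 le_rfl x
    rw [hc1] at h
    simp only [hP0, hP1] at h
    linarith
  have hP3 : ∀ x, P 3 x = (2*x + 2*a) * (2*x*(2*x - 2*a) - 1) - (2*x - 2*a) := by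
    intro x
    have h := hP 2 (by norm_num) x
    rw [hc2] at h
    simp only [hP1, hP2] at h
    linarith
  have hP4 : ∀ x, P 4 x = 2*x*((2*x + 2*a) * (2*x*(2*x - 2*a) - 1) - (2*x - 2*a))
      - (2*x*(2*x - 2*a) - 1) := by
    intro x
    have h := hP 3 (by norm_num) x
    rw [hc3] at h
    simp only [hP2, hP3] at h
    linarith
  have hQ2 : ∀ x, Pstar 2 x = 4*x := by
    intro x
    have h := hQ 1 le_rfl x
    rw [hc1] at h
    simp only [hQ0, hQ1] at h
    linarith
  have hQ3 : ∀ x, Pstar 3 x = (2*x + 2*a) * (4*x) - 2 := by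
    intro x
    have h := hQ 2 (by norm_num) x
    rw [hc2] at h
    simp only [hQ1, hQ2] at h
    linarith
  have hmain : ∀ x, g x ^ 2 - 1
      = 16*x^2*(x^2 - a^2 - 1)*(2*x^2 - 2*a*x - 1)*(2*x^2 + 2*a*x - 1) := by
    intro x
    rw [hg, hP4, hQ3]
    ring
  refine ⟨hmain, by rw [hmain]; ring, ?_⟩
  have key : (fun x => g x ^ 2 - 1)
      = fun x => x^2 * (16*(x^2 - a^2 - 1)*(2*x^2 - 2*a*x - 1)*(2*x^2 + 2*a*x - 1)) := by
    funext x; rw [hmain x]; ring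
  rw [key]
  have hrest : DifferentiableAt ℝ
      (fun x : ℝ => 16*(x^2 - a^2 - 1)*(2*x^2 - 2*a*x - 1)*(2*x^2 + 2*a*x - 1)) 0 := by
    fun_prop
  have h2 : HasDerivAt (fun x : ℝ => x^2) 0 0 := by
    simpa using hasDerivAt_pow 2 (0:ℝ)
  have := h2.mul hrest.hasDerivAt
  exact this.congr_deriv (by simp)
end
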